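/- Let n ≥ 2, ρ = (ρ_1, …, ρ_n) ∈ (0,1)^n with Σ_j ρ_j = 1, λ > 0, and consider the ODE df/dt = 2λ A f on ℝ^n with A = ρ ⊗ (1, …, 1) − I. Let ψ be an entropy generator and μ > 0 be such that for all u = (u_1, …, u_n) ∈ (0,1]^n with Σ_j u_j = 1: Σ_{j=1}^n ψ''(u_j/ρ_j) (1/ρ_j) (ρ_j − u_j)² ≥ (μ/(2λ)) Σ_{j=1}^n ψ'(u_j/ρ_j) (u_j − ρ_j). Then for every initial datum f^I with strictly positive entries and Σ_j f_j^I = 1, the solution f(t) = ρ + (f^I − ρ) e^{−2λ t} satisfies both I_ψ(f(t)|ρ) ≤ e^{−(2λ+μ) t} I_ψ(f^I|ρ) and e_ψ(f(t)|ρ) ≤ e^{−(2λ+μ) t} e_ψ(f^I|ρ) for all t ≥ 0. -/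

import Mathlib

/-!
Along the explicit solution `f(t) = ρ + (f^I - ρ) e^{-2λt}` the mass stays `1` and the entries
stay in `(0, 1]`, so the admissibility condition applies at every time. Differentiating gives
`d/dt e_ψ = -I_ψ` and `d/dt I_ψ = -(2λ)² Q - 2λ I_ψ`, where `Q` is the Hessian of `e_ψ` evaluated
on `f - ρ`; admissibility says `(2λ)² Q ≥ μ I_ψ`, so `I_ψ' ≤ -(2λ + μ) I_ψ` and Grönwall gives the
decay of `I_ψ`. For the entropy, `I_ψ - (2λ + μ) e_ψ` is nonincreasing and tends to `0` as
`f → ρ`, hence it is nonnegative, i.e. `e_ψ' ≤ -(2λ + μ) e_ψ`.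
-/

open Real Set Filter Topology

lemma le_mul_exp_of_hasDerivAt_le {F F' : ℝ → ℝ} {K : ℝ}
    (hF : ∀ t ∈ Ici (0 : ℝ), HasDerivAt F (F' t) t) (hle : ∀ t ∈ Ici (0 : ℝ), F' t ≤ K * F t) :
    ∀ t ∈ Ici (0 : ℝ), F t ≤ F 0 * exp (K * t) := by
  intro t ht
  simpa [gronwallBound_ε0] using
    le_gronwallBound_of_liminf_deriv_right_le (ε := 0)
      (fun s hs => (hF s hs.1).continuousAt.continuousWithinAt)
      (fun s hs _ hr => (hF s hs.1).hasDerivWithinAt.liminf_right_slope_le hr) le_rfl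
      (fun s hs => by simpa using hle s hs.1) t ⟨ht, le_rfl⟩

lemma nonneg_of_antitoneOn_of_tendsto_zero {G : ℝ → ℝ} {a t : ℝ} (hG : AntitoneOn G (Ici a))
    (hlim : Tendsto G atTop (𝓝 0)) (ht : t ∈ Ici a) : 0 ≤ G t :=
  le_of_tendsto hlim <| by
    filter_upwards [eventually_ge_atTop t] with s hs using hG ht (le_trans ht hs) hs

lemma le_mul_exp_of_hasDerivAt_neg_of_hasDerivAt_le {E I I' : ℝ → ℝ} {a : ℝ}
    (hE : ∀ t ∈ Ici (0 : ℝ), HasDerivAt E (-I t) t) (hI : ∀ t ∈ Ici (0 : ℝ), HasDerivAt I (I' t) t)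
    (hle : ∀ t ∈ Ici (0 : ℝ), I' t ≤ -a * I t)
    (hElim : Tendsto E atTop (𝓝 0)) (hIlim : Tendsto I atTop (𝓝 0)) :
    ∀ t ∈ Ici (0 : ℝ), E t ≤ E 0 * exp (-a * t) := by
  have hH : ∀ t ∈ Ici (0 : ℝ), HasDerivAt (fun s => I s - a * E s) (I' t - a * -I t) t :=
    fun t ht => (hI t ht).sub ((hE t ht).const_mul a)
  have hanti : AntitoneOn (fun s => I s - a * E s) (Ici 0) := by
    refine antitoneOn_of_hasDerivWithinAt_nonpos (convex_Ici 0)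
      (fun t ht => (hH t ht).continuousAt.continuousWithinAt)
      (fun t ht => (hH t (interior_subset ht)).hasDerivWithinAt) fun t ht => ?_
    linarith [hle t (interior_subset ht)]
  have hlim : Tendsto (fun s => I s - a * E s) atTop (𝓝 0) := by
    simpa using hIlim.sub (hElim.const_mul a)
  refine le_mul_exp_of_hasDerivAt_le hE fun t ht => ?_
  linarith [nonneg_of_antitoneOn_of_tendsto_zero hanti hlim ht]

noncomputable section BGK

variable {ι : Type*} {ψ : ℝ → ℝ} {ρ fI : ι → ℝ} {lam : ℝ}

def bgkFlow (ρ fI : ι → ℝ) (lam t : ℝ) : ι → ℝ :=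
  fun j => ρ j + (fI j - ρ j) * exp (-(2 * lam) * t)

lemma bgkFlow_zero : bgkFlow ρ fI lam 0 = fI := by
  ext j
  simp [bgkFlow]

lemma bgkFlow_mem_Ioc (hlam : 0 ≤ lam) (hρ : ∀ j, ρ j ∈ Icc (0 : ℝ) 1)
    (hfI : ∀ j, fI j ∈ Ioc (0 : ℝ) 1) {t : ℝ} (ht : 0 ≤ t) (j : ι) :
    bgkFlow ρ fI lam t j ∈ Ioc (0 : ℝ) 1 := by
  have he0 : 0 < exp (-(2 * lam) * t) := exp_pos _
  have he1 : exp (-(2 * lam) * t) ≤ 1 := exp_le_one_iff.2 (by nlinarith)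
  obtain ⟨hρ0, hρ1⟩ := hρ j
  obtain ⟨hf0, hf1⟩ := hfI j
  -- `bgkFlow` is the convex combination `(1 - e) ρ + e f^I` with `e = exp (-2λt) ∈ (0, 1]`
  constructor <;> simp only [bgkFlow] <;> nlinarith [mul_nonneg (sub_nonneg.2 he1) hρ0]

lemma hasDerivAt_bgkFlow (t : ℝ) (j : ι) :
    HasDerivAt (fun s => bgkFlow ρ fI lam s j) (-(2 * lam) * (bgkFlow ρ fI lam t j - ρ j)) t := by
  refine ((((hasDerivAt_id t).const_mul (-(2 * lam))).exp.const_mul (fI j - ρ j)).const_add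
    (ρ j)).congr_deriv ?_
  simp only [bgkFlow, id]
  ring

lemma tendsto_bgkFlow (hlam : 0 < lam) : Tendsto (bgkFlow ρ fI lam) atTop (𝓝 ρ) := by
  have he : Tendsto (fun t => exp (-(2 * lam) * t)) atTop (𝓝 0) :=
    tendsto_exp_atBot.comp (tendsto_id.const_mul_atTop_of_neg (by linarith))
  refine tendsto_pi_nhds.2 fun j => ?_
  simpa [bgkFlow] using (he.const_mul (fI j - ρ j)).const_add (ρ j)

lemma continuousAt_div_apply (ρ : ι → ℝ) (j : ι) :
    ContinuousAt (fun u : ι → ℝ => u j / ρ j) ρ :=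
  (continuous_apply j).continuousAt.div_const _

variable [Fintype ι]

def relEntropy (ψ : ℝ → ℝ) (ρ u : ι → ℝ) : ℝ :=
  ∑ j, ψ (u j / ρ j) * ρ j

def fisherInfo (ψ : ℝ → ℝ) (lam : ℝ) (ρ u : ι → ℝ) : ℝ :=
  2 * lam * ∑ j, deriv ψ (u j / ρ j) * (u j - ρ j)

/-- The Hessian of `relEntropy ψ ρ` at `u`, evaluated on `u - ρ`. -/
def relEntropyHessian (ψ : ℝ → ℝ) (ρ u : ι → ℝ) : ℝ :=
  ∑ j, deriv (deriv ψ) (u j / ρ j) * (1 / ρ j) * (ρ j - u j) ^ 2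

lemma sum_bgkFlow (h : ∑ j, fI j = ∑ j, ρ j) (t : ℝ) :
    ∑ j, bgkFlow ρ fI lam t j = ∑ j, ρ j := by
  simp [bgkFlow, Finset.sum_add_distrib, ← Finset.sum_mul, Finset.sum_sub_distrib, h]

lemma hasDerivAt_relEntropy_comp {γ : ℝ → ι → ℝ} {γ' : ι → ℝ} {t : ℝ}
    (hγ : ∀ j, HasDerivAt (fun s => γ s j) (γ' j) t)
    (hψ : ∀ j, DifferentiableAt ℝ ψ (γ t j / ρ j)) (hρ : ∀ j, ρ j ≠ 0) :
    HasDerivAt (fun s => relEntropy ψ ρ (γ s)) (∑ j, deriv ψ (γ t j / ρ j) * γ' j) t := by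
  refine (HasDerivAt.fun_sum fun j _ =>
    (((hψ j).hasDerivAt.comp t ((hγ j).div_const (ρ j))).mul_const (ρ j))).congr_deriv ?_
  refine Finset.sum_congr rfl fun j _ => ?_
  field_simp [hρ j]

lemma hasDerivAt_fisherInfo_comp {γ : ℝ → ι → ℝ} {γ' : ι → ℝ} {t : ℝ}
    (hγ : ∀ j, HasDerivAt (fun s => γ s j) (γ' j) t)
    (hψ : ∀ j, DifferentiableAt ℝ (deriv ψ) (γ t j / ρ j)) :
    HasDerivAt (fun s => fisherInfo ψ lam ρ (γ s))
      (2 * lam * ∑ j, (deriv (deriv ψ) (γ t j / ρ j) * (γ' j / ρ j) * (γ t j - ρ j)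
        + deriv ψ (γ t j / ρ j) * γ' j)) t :=
  (HasDerivAt.fun_sum fun j _ =>
    ((hψ j).hasDerivAt.comp t ((hγ j).div_const (ρ j))).mul ((hγ j).sub_const (ρ j))).const_mul _

lemma hasDerivAt_relEntropy_bgkFlow (t : ℝ)
    (hψ : ∀ j, DifferentiableAt ℝ ψ (bgkFlow ρ fI lam t j / ρ j)) (hρ : ∀ j, ρ j ≠ 0) :
    HasDerivAt (fun s => relEntropy ψ ρ (bgkFlow ρ fI lam s))
      (-fisherInfo ψ lam ρ (bgkFlow ρ fI lam t)) t := by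
  refine (hasDerivAt_relEntropy_comp (hasDerivAt_bgkFlow t) hψ hρ).congr_deriv ?_
  simp only [fisherInfo, Finset.mul_sum, ← Finset.sum_neg_distrib]
  exact Finset.sum_congr rfl fun j _ => by ring

lemma hasDerivAt_fisherInfo_bgkFlow (t : ℝ)
    (hψ : ∀ j, DifferentiableAt ℝ (deriv ψ) (bgkFlow ρ fI lam t j / ρ j)) :
    HasDerivAt (fun s => fisherInfo ψ lam ρ (bgkFlow ρ fI lam s))
      (-(2 * lam) ^ 2 * relEntropyHessian ψ ρ (bgkFlow ρ fI lam t)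
        - 2 * lam * fisherInfo ψ lam ρ (bgkFlow ρ fI lam t)) t := by
  refine (hasDerivAt_fisherInfo_comp (hasDerivAt_bgkFlow t) hψ).congr_deriv ?_
  simp only [fisherInfo, relEntropyHessian, Finset.mul_sum, ← Finset.sum_sub_distrib]
  exact Finset.sum_congr rfl fun j _ => by ring

lemma relEntropy_self (hψ : ψ 1 = 0) (hρ : ∀ j, ρ j ≠ 0) : relEntropy ψ ρ ρ = 0 := by
  simp [relEntropy, div_self (hρ _), hψ]

lemma fisherInfo_self : fisherInfo ψ lam ρ ρ = 0 := by
  simp [fisherInfo]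

lemma continuousAt_relEntropy (hψ : ContinuousAt ψ 1) (hρ : ∀ j, ρ j ≠ 0) :
    ContinuousAt (relEntropy ψ ρ) ρ :=
  tendsto_finsetSum _ fun j _ =>
    (hψ.comp_of_eq (continuousAt_div_apply ρ j) (div_self (hρ j))).mul continuousAt_const

lemma continuousAt_fisherInfo (hψ : ContinuousAt (deriv ψ) 1) (hρ : ∀ j, ρ j ≠ 0) :
    ContinuousAt (fisherInfo ψ lam ρ) ρ :=
  continuousAt_const.mul <| tendsto_finsetSum _ fun j _ =>
    (hψ.comp_of_eq (continuousAt_div_apply ρ j) (div_self (hρ j))).mul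
      ((continuous_apply j).continuousAt.sub continuousAt_const)

lemma tendsto_relEntropy_bgkFlow (hlam : 0 < lam) (hψ : ContinuousAt ψ 1) (hψ1 : ψ 1 = 0)
    (hρ : ∀ j, ρ j ≠ 0) :
    Tendsto (fun t => relEntropy ψ ρ (bgkFlow ρ fI lam t)) atTop (𝓝 0) :=
  relEntropy_self hψ1 hρ ▸ (continuousAt_relEntropy hψ hρ).tendsto.comp (tendsto_bgkFlow hlam)

lemma tendsto_fisherInfo_bgkFlow (hlam : 0 < lam) (hψ : ContinuousAt (deriv ψ) 1)
    (hρ : ∀ j, ρ j ≠ 0) :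
    Tendsto (fun t => fisherInfo ψ lam ρ (bgkFlow ρ fI lam t)) atTop (𝓝 0) :=
  fisherInfo_self (ψ := ψ) (lam := lam) (ρ := ρ) ▸
    (continuousAt_fisherInfo hψ hρ).tendsto.comp (tendsto_bgkFlow hlam)

lemma fisherInfo_deriv_le_of_admissible {μ : ℝ} {u : ι → ℝ} (hlam : 0 < lam)
    (hadm : μ / (2 * lam) * ∑ j, deriv ψ (u j / ρ j) * (u j - ρ j) ≤ relEntropyHessian ψ ρ u) :
    -(2 * lam) ^ 2 * relEntropyHessian ψ ρ u - 2 * lam * fisherInfo ψ lam ρ u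
      ≤ -(2 * lam + μ) * fisherInfo ψ lam ρ u := by
  rw [div_mul_eq_mul_div, div_le_iff₀ (by positivity)] at hadm
  simp only [fisherInfo]
  nlinarith

end BGK

theorem stmt_6
    (n : ℕ)
    (ρ : Fin n → ℝ) (hρ : ∀ j, ρ j ∈ Set.Ioo (0:ℝ) 1) (hρsum : ∑ j, ρ j = 1)
    (lam μ : ℝ) (hlam : 0 < lam)
    (ψ : ℝ → ℝ)
    (hψsmooth : ContDiffOn ℝ 2 ψ (Ioi 0))
    (hψ1 : ψ 1 = 0)
    (hadm : ∀ u : Fin n → ℝ, (∀ j, u j ∈ Set.Ioc (0:ℝ) 1) → ∑ j, u j = 1 →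
      (μ / (2 * lam)) * ∑ j, deriv ψ (u j / ρ j) * (u j - ρ j) ≤
        ∑ j, deriv (deriv ψ) (u j / ρ j) * (1 / ρ j) * (ρ j - u j) ^ 2)
    (fI : Fin n → ℝ) (hfI : ∀ j, 0 < fI j) (hfIsum : ∑ j, fI j = 1)
    (f : ℝ → Fin n → ℝ)
    (hf : ∀ t : ℝ, ∀ j, f t j = ρ j + (fI j - ρ j) * Real.exp (-(2 * lam) * t)) :
    ∀ t : ℝ, 0 ≤ t →
      (2 * lam * ∑ j, deriv ψ (f t j / ρ j) * (f t j - ρ j) ≤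
          Real.exp (-(2 * lam + μ) * t) *
            (2 * lam * ∑ j, deriv ψ (fI j / ρ j) * (fI j - ρ j))) ∧
      (∑ j, ψ (f t j / ρ j) * ρ j ≤
          Real.exp (-(2 * lam + μ) * t) * ∑ j, ψ (fI j / ρ j) * ρ j) := by
  obtain rfl : f = bgkFlow ρ fI lam := funext fun t => funext (hf t)
  have hρ0 : ∀ j, ρ j ≠ 0 := fun j => (hρ j).1.ne'
  have hψdiff : ∀ x : ℝ, 0 < x → DifferentiableAt ℝ ψ x := fun x hx =>
    (hψsmooth.differentiableOn two_ne_zero).differentiableAt (Ioi_mem_nhds hx)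
  have hψ'diff : ∀ x : ℝ, 0 < x → DifferentiableAt ℝ (deriv ψ) x := fun x hx =>
    ((hψsmooth.deriv_of_isOpen isOpen_Ioi (by norm_num)).differentiableOn one_ne_zero)
      |>.differentiableAt (Ioi_mem_nhds hx)
  have hfI1 : ∀ j, fI j ≤ 1 := fun j =>
    hfIsum ▸ Finset.single_le_sum (fun k _ => (hfI k).le) (Finset.mem_univ j)
  have hmem : ∀ t ∈ Ici (0 : ℝ), ∀ j, bgkFlow ρ fI lam t j ∈ Ioc (0 : ℝ) 1 := fun t ht =>
    bgkFlow_mem_Ioc hlam.le (fun j => Ioo_subset_Icc_self (hρ j)) (fun j => ⟨hfI j, hfI1 j⟩) ht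
  have hpos : ∀ t ∈ Ici (0 : ℝ), ∀ j, 0 < bgkFlow ρ fI lam t j / ρ j := fun t ht j =>
    div_pos (hmem t ht j).1 (hρ j).1
  have hI := fun t ht => hasDerivAt_fisherInfo_bgkFlow t fun j => hψ'diff _ (hpos t ht j)
  have hE := fun t ht => hasDerivAt_relEntropy_bgkFlow t (fun j => hψdiff _ (hpos t ht j)) hρ0
  have hdecay := fun t ht => fisherInfo_deriv_le_of_admissible hlam <|
    hadm _ (hmem t ht) (by rw [sum_bgkFlow (hfIsum.trans hρsum.symm), hρsum])
  intro t ht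
  have hIt := le_mul_exp_of_hasDerivAt_le hI hdecay t ht
  have hEt := le_mul_exp_of_hasDerivAt_neg_of_hasDerivAt_le hE hI hdecay
    (tendsto_relEntropy_bgkFlow hlam (hψdiff 1 one_pos).continuousAt hψ1 hρ0)
    (tendsto_fisherInfo_bgkFlow hlam (hψ'diff 1 one_pos).continuousAt hρ0) t ht
  rw [bgkFlow_zero, mul_comm] at hIt hEt
  exact ⟨hIt, hEt⟩
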